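/- If G is connected with at least 3 vertices and π is a layout of G, then for every index i with mid(π_{≤ i−1}) ∩ endpoints(π(i)) = ∅, we have d(π_{≤ i−1}) < d(π_{≤ i}); in particular at least one endpoint of π(i) has degree more than one in G. -/

import Mathlib

variable {V : Type*} [Fintype V] [DecidableEq V]

/-- `Vs F` is the set of endpoints of edges in `F`. -/
def Vs (F : Finset (Sym2 V)) : Finset V :=
  Finset.univ.filter (fun v => ∃ e ∈ F, v ∈ e)

/-- The set of endpoints of a single edge. -/
def eset (e : Sym2 V) : Finset V := Finset.univ.filter (fun v => v ∈ e)

/-- `mids E F` is mid(F) = V(F) ∩ V(E \ F), relative to the edge set `E`. -/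
def mids (E F : Finset (Sym2 V)) : Finset V := Vs F ∩ Vs (E \ F)

/-- `dd E F` is d(F) = |mid(F)|, relative to the edge set `E`. -/
def dd (E F : Finset (Sym2 V)) : ℕ := (mids E F).card

/-- A layout of the edge set `E`: a duplicate-free list enumerating `E`
(equivalently, a bijection {1,…,m} → E). -/
def IsLayout (E : Finset (Sym2 V)) (L : List (Sym2 V)) : Prop :=
  L.Nodup ∧ L.toFinset = E

/-- The (partial) layout `L` has width at most `k` w.r.t. the edge set `E`:
every prefix `π_{≤ i}` satisfies d(π_{≤ i}) ≤ k. -/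
def WidthLE (E : Finset (Sym2 V)) (L : List (Sym2 V)) (k : ℕ) : Prop :=
  ∀ i, dd E (L.take i).toFinset ≤ k

/-- The linearwidth of the edge set `E`: the minimum width of a layout of `E`. -/
noncomputable def lw (E : Finset (Sym2 V)) : ℕ :=
  sInf {k | ∃ L, IsLayout E L ∧ WidthLE E L k}

/-- The number of edges of `S` incident to `u`. -/
def degIn (S : Finset (Sym2 V)) (u : V) : ℕ := (S.filter (fun e => u ∈ e)).card

/-- `X` is a path decomposition of `G`, given as a list of bags. -/
def IsPD (G : SimpleGraph V) (X : List (Finset V)) : Prop :=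
  (∀ v : V, ∃ B ∈ X, v ∈ B) ∧
  (∀ e ∈ G.edgeSet, ∃ B ∈ X, eset e ⊆ B) ∧
  (∀ v : V, ∀ i j l : ℕ, i ≤ j → j ≤ l → l < X.length →
    v ∈ X.getD i ∅ → v ∈ X.getD l ∅ → v ∈ X.getD j ∅)

/-- The pathwidth of `G`: the minimum over path decompositions of (max bag size) − 1. -/
noncomputable def pw (G : SimpleGraph V) : ℕ :=
  sInf {k | ∃ X, IsPD G X ∧ ∀ B ∈ X, B.card ≤ k + 1}

/-- The closure F* of `F` in `E`: all edges of `E` with both endpoints in `V(F)`. -/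
def cl (E F : Finset (Sym2 V)) : Finset (Sym2 V) := E.filter (fun e => eset e ⊆ Vs F)

/-- A partial layout `S` is `k`-extendable: it is a prefix of some layout
of `E` of width at most `k`. -/
def Extendable (E : Finset (Sym2 V)) (k : ℕ) (S : List (Sym2 V)) : Prop :=
  ∃ L, IsLayout E L ∧ WidthLE E L k ∧ S <+: L

/-!
Let `e = π(i)` and `F = π_{≤ i-1}`. Since `G` is connected and has a vertex outside `e`, some
endpoint `u` of `e` has a neighbour `v` outside `e`; so `u` has degree at least two. The edge
`uv` cannot lie in `F`, for otherwise `u ∈ V(F) ∩ V(E \ F) = mid(F)`, although `mid(F)` misses `e`.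
Hence adding `e` to `F` keeps every vertex of `mid(F)` (none is an endpoint of `e`) and adds `u`.
-/

lemma mem_Vs {F : Finset (Sym2 V)} {v : V} : v ∈ Vs F ↔ ∃ e ∈ F, v ∈ e := by
  simp [Vs]

lemma mem_eset {e : Sym2 V} {v : V} : v ∈ eset e ↔ v ∈ e := by
  simp [eset]

lemma mids_subset_mids_insert {E F : Finset (Sym2 V)} {e : Sym2 V}
    (hdisj : Disjoint (mids E F) (eset e)) : mids E F ⊆ mids E (insert e F) := by
  intro v hv
  obtain ⟨hvF, hvEF⟩ := Finset.mem_inter.mp hv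
  obtain ⟨f, hf, hvf⟩ := mem_Vs.mp hvEF
  have hfe : f ≠ e := by
    rintro rfl
    exact Finset.disjoint_left.mp hdisj hv (mem_eset.mpr hvf)
  refine Finset.mem_inter.mpr ⟨?_, mem_Vs.mpr ⟨f, ?_, hvf⟩⟩
  · obtain ⟨g, hg, hvg⟩ := mem_Vs.mp hvF
    exact mem_Vs.mpr ⟨g, Finset.mem_insert_of_mem hg, hvg⟩
  · simpa [hfe] using hf

lemma dd_lt_dd_insert {E F : Finset (Sym2 V)} {e f : Sym2 V} {u : V}
    (heE : e ∈ E) (heF : e ∉ F) (hdisj : Disjoint (mids E F) (eset e))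
    (hfE : f ∈ E) (hfe : f ≠ e) (hue : u ∈ e) (huf : u ∈ f) :
    dd E F < dd E (insert e F) := by
  have hu : u ∉ mids E F := Finset.disjoint_right.mp hdisj (mem_eset.mpr hue)
  have hfF : f ∉ F := fun hfF =>
    hu (Finset.mem_inter.mpr ⟨mem_Vs.mpr ⟨f, hfF, huf⟩, mem_Vs.mpr ⟨e, by simp [heE, heF], hue⟩⟩)
  have hu' : u ∈ mids E (insert e F) :=
    Finset.mem_inter.mpr ⟨mem_Vs.mpr ⟨e, Finset.mem_insert_self e F, hue⟩,
      mem_Vs.mpr ⟨f, by simp [hfE, hfe, hfF], huf⟩⟩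
  exact Finset.card_lt_card <|
    (Finset.ssubset_iff_of_subset (mids_subset_mids_insert hdisj)).mpr ⟨u, hu', hu⟩

lemma List.Nodup.get_notMem_take {α : Type*} {L : List α} (hL : L.Nodup) (i : Fin L.length) :
    L.get i ∉ L.take i := by
  have h : (L.take i ++ [L.get i]).Nodup := by
    rw [List.get_eq_getElem, ← List.take_succ_eq_append_getElem]
    exact hL.sublist (List.take_sublist _ _)
  simpa using (List.nodup_append.mp h).2.2 (L.get i)

lemma List.toFinset_take_succ {α : Type*} [DecidableEq α] (L : List α) (i : Fin L.length) :
    (L.take (i + 1)).toFinset = insert (L.get i) (L.take i).toFinset := by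
  rw [List.take_succ_eq_append_getElem i.isLt, List.toFinset_append, Finset.union_comm]
  rfl

namespace SimpleGraph

variable {G : SimpleGraph V}

lemma Connected.exists_mem_adj_notMem (hG : G.Connected) (h3 : 3 ≤ Fintype.card V) {e : Sym2 V} :
    ∃ u ∈ e, ∃ v, G.Adj u v ∧ v ∉ e := by
  induction e with
  | h a b =>
    obtain ⟨w, -, hw⟩ := Finset.exists_mem_notMem_of_card_lt_card
      (s := {a, b}) (t := Finset.univ) (Finset.card_le_two.trans_lt (Finset.card_univ (α := V) ▸ h3))
    obtain ⟨d, -, hd, hd'⟩ := (hG.preconnected a w).some.exists_boundary_dart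
      {x | x ∈ s(a, b)} (by simp) (by simpa using hw)
    exact ⟨d.fst, hd, d.snd, d.adj, hd'⟩

omit [Fintype V] in
lemma one_lt_degree_of_adj_notMem {e : Sym2 V} {u v : V} [Fintype (G.neighborSet u)]
    (he : e ∈ G.edgeSet) (hue : u ∈ e) (huv : G.Adj u v) (hve : v ∉ e) : 1 < G.degree u := by
  rw [← card_incidenceFinset_eq_degree]
  refine Finset.one_lt_card.mpr ⟨e, ?_, s(u, v), ?_, ?_⟩
  · simpa [mem_incidenceFinset, incidenceSet] using ⟨he, hue⟩
  · simpa [mem_incidenceFinset] using huv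
  · exact fun h => hve (h ▸ Sym2.mem_mk_right u v)

end SimpleGraph

/-- If G is connected with ≥ 3 vertices and mid(π_{≤ i−1}) ∩ endpoints(π(i)) = ∅,
then d(π_{≤ i−1}) < d(π_{≤ i}); in particular some endpoint of π(i) has degree > 1. -/
theorem stmt10 (G : SimpleGraph V) [DecidableRel G.Adj] (hG : G.Connected)
    (h3 : 3 ≤ Fintype.card V) (L : List (Sym2 V)) (hL : IsLayout G.edgeFinset L)
    (i : Fin L.length)
    (hdisj : mids G.edgeFinset (L.take i).toFinset ∩ eset (L.get i) = ∅) :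
    dd G.edgeFinset (L.take i).toFinset <
      dd G.edgeFinset (L.take (i + 1)).toFinset ∧
    ∃ u ∈ eset (L.get i), 1 < G.degree u := by
  have he : L.get i ∈ G.edgeFinset := hL.2 ▸ List.mem_toFinset.mpr (L.get_mem i)
  obtain ⟨u, hue, v, huv, hve⟩ := hG.exists_mem_adj_notMem h3 (e := L.get i)
  refine ⟨?_, u, mem_eset.mpr hue,
    G.one_lt_degree_of_adj_notMem (G.mem_edgeFinset.mp he) hue huv hve⟩
  rw [List.toFinset_take_succ]
  exact dd_lt_dd_insert he (fun h => hL.1.get_notMem_take i (List.mem_toFinset.mp h))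
    (Finset.disjoint_iff_inter_eq_empty.mpr hdisj) (G.mem_edgeFinset.mpr huv)
    (fun h => hve (h ▸ Sym2.mem_mk_right u v)) hue (Sym2.mem_mk_left u v)
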